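/- arXiv:1007.1799 — 3 statements merged into one kernel-verified Lean document; each statement's English description precedes it below -/
import Mathlib

section
/- For every integer j ≥ 1, there exist at least 3^{j-1} distinct quadtrees having exactly j internal nodes; equivalently, there is an injection from Fin(3^{j-1}) into the set of quadtrees q with internal(q) = j. -/
/-- A quadtree: every node is either a leaf or an internal node with four children. -/
inductive Quadtree : Type
  | leaf : Quadtree
  | node : Quadtree → Quadtree → Quadtree → Quadtree → Quadtree

/-- The number of internal-node constructors occurring in a quadtree. -/
def Quadtree.internal : Quadtree → ℕ
  | .leaf => 0
  | .node a b c d => 1 + a.internal + b.internal + c.internal + d.internal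

/-- Build a "path" quadtree from a list of directions. -/
def Quadtree.build : List (Fin 3) → Quadtree
  | [] => .node .leaf .leaf .leaf .leaf
  | d :: ds =>
    match d with
    | 0 => .node (build ds) .leaf .leaf .leaf
    | 1 => .node .leaf (build ds) .leaf .leaf
    | 2 => .node .leaf .leaf (build ds) .leaf

lemma Quadtree.internal_build (l : List (Fin 3)) :
    (Quadtree.build l).internal = l.length + 1 := by
  induction l with
  | nil => simp [build, internal]
  | cons d ds ih =>
    fin_cases d <;> simp [build, internal, ih] <;> omega

lemma Quadtree.build_ne_leaf (l : List (Fin 3)) : Quadtree.build l ≠ .leaf := by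
  cases l with
  | nil => simp [build]
  | cons d ds => fin_cases d <;> simp [build]

lemma Quadtree.build_injective : Function.Injective Quadtree.build := by
  intro l1
  induction l1 with
  | nil =>
    intro l2 h
    cases l2 with
    | nil => rfl
    | cons d ds =>
      exfalso
      fin_cases d <;> simp [build] at h <;>
        exact Quadtree.build_ne_leaf ds h.symm
  | cons d ds ih =>
    intro l2 h
    cases l2 with
    | nil =>
      exfalso
      fin_cases d <;> simp [build] at h <;>
        exact Quadtree.build_ne_leaf ds h
    | cons e es =>
      fin_cases d <;> fin_cases e <;> simp [build] at h <;>
        first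
          | (obtain ⟨h1, -⟩ := h; exact (Quadtree.build_ne_leaf _ h1).elim)
          | (obtain ⟨-, h1, -⟩ := h; exact (Quadtree.build_ne_leaf _ h1).elim)
          | (obtain ⟨-, h1⟩ := h; exact (Quadtree.build_ne_leaf _ h1).elim)
          | (obtain ⟨-, -, h1⟩ := h; exact (Quadtree.build_ne_leaf _ h1).elim)
          | (rw [ih (by tauto)])

/-- For every `j ≥ 1` there are at least `3^(j-1)` distinct quadtrees with exactly `j`
internal nodes: there is an injection from `Fin (3^(j-1))` into the set of such quadtrees. -/
theorem exists_injection_fin_pow_to_quadtrees (j : ℕ) (hj : 1 ≤ j) :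
    ∃ f : Fin (3 ^ (j - 1)) → {q : Quadtree // q.internal = j}, Function.Injective f := by
  refine ⟨fun i => ⟨Quadtree.build (List.ofFn (finFunctionFinEquiv.symm i)), by
    simp [Quadtree.internal_build]; omega⟩, ?_⟩
  intro a b h
  have h1 : List.ofFn (finFunctionFinEquiv.symm a) = List.ofFn (finFunctionFinEquiv.symm b) :=
    Quadtree.build_injective (congrArg Subtype.val h)
  have h2 : (finFunctionFinEquiv.symm a : Fin (j-1) → Fin 3) = finFunctionFinEquiv.symm b := by
    funext k
    have := List.ofFn_inj.mp h1
    exact congrFun this k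
  exact finFunctionFinEquiv.symm.injective h2
end

section
/- Let 𝒮 be a nonempty finite set and let n ≥ 1 and m ≥ 0 be integers with m ≤ n − 1. The number of sequences s : Fin n → 𝒮 whose switch count is at most m is at most (Σ_{j=0}^{m} C(n−1, j)) · |𝒮|^{m+1}, where C(·,·) denotes the binomial coefficient. -/
open Classical in
/-- The switch count of a finite sequence `f : Fin n → 𝒮`: the number of consecutive
positions at which the value changes. -/
noncomputable def switchCount {𝒮 : Type*} {n : ℕ} (f : Fin n → 𝒮) : ℕ :=
  ∑ i : Fin n, if h : (i : ℕ) + 1 < n then (if f i = f ⟨(i : ℕ) + 1, h⟩ then 0 else 1) else 0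

section Aux

variable {𝒮 : Type*} [DecidableEq 𝒮] {k : ℕ}

/-- The set of switch positions of a sequence on `Fin (k+1)`. -/
def swD (s : Fin (k + 1) → 𝒮) : Finset (Fin k) :=
  Finset.univ.filter (fun i => s i.castSucc ≠ s i.succ)

/-- The number of elements of `S` below position `i`. -/
def cnt (S : Finset (Fin k)) (i : Fin (k + 1)) : ℕ :=
  (S.filter (fun x => x.val < i.val)).card

lemma cnt_mono {S : Finset (Fin k)} {i i' : Fin (k + 1)} (h : (i : ℕ) ≤ (i' : ℕ)) :
    cnt S i ≤ cnt S i' := by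
  apply Finset.card_le_card
  intro x hx
  simp only [Finset.mem_filter] at hx ⊢
  exact ⟨hx.1, by omega⟩

lemma cnt_le_card (S : Finset (Fin k)) (i : Fin (k + 1)) : cnt S i ≤ S.card :=
  Finset.card_le_card (Finset.filter_subset _ _)

lemma cnt_succ (S : Finset (Fin k)) (i : Fin (k + 1)) (h : (i : ℕ) < k) :
    cnt S ⟨(i : ℕ) + 1, by omega⟩ = cnt S i + (if ⟨(i : ℕ), h⟩ ∈ S then 1 else 0) := by
  classical
  unfold cnt
  have hset : S.filter (fun x => x.val < (i : ℕ) + 1)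
      = S.filter (fun x => x.val < i.val) ∪ S.filter (fun x => x = ⟨(i : ℕ), h⟩) := by
    rw [← Finset.filter_or]
    apply Finset.filter_congr
    intro x hx
    constructor
    · intro hx'
      rcases Nat.lt_or_ge (x : ℕ) (i : ℕ) with h1 | h1
      · exact Or.inl h1
      · exact Or.inr (Fin.ext (show (x : ℕ) = (i : ℕ) by omega))
    · rintro (h1 | rfl)
      · omega
      · exact Nat.lt_succ_self _
  rw [hset, Finset.card_union_of_disjoint, Finset.filter_eq']
  · split_ifs with hmem <;> simp
  · rw [Finset.disjoint_left]
    intro a ha hb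
    simp only [Finset.mem_filter] at ha hb
    rw [hb.2] at ha
    exact absurd ha.2 (show ¬((i : ℕ) < (i : ℕ)) by omega)

lemma block_const_aux (s : Fin (k + 1) → 𝒮) :
    ∀ d (i i' : Fin (k + 1)), (i' : ℕ) = (i : ℕ) + d →
      cnt (swD s) i = cnt (swD s) i' → s i = s i' := by
  intro d
  induction d with
  | zero =>
    intro i i' h _
    have : i = i' := Fin.ext (by omega)
    rw [this]
  | succ d ih =>
    intro i i' h hc
    have hik : (i : ℕ) < k := by
      have := i'.isLt; omega
    set mid : Fin (k + 1) := ⟨(i : ℕ) + 1, by omega⟩ with hmid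
    have h1 : cnt (swD s) mid = cnt (swD s) i + (if ⟨(i : ℕ), hik⟩ ∈ swD s then 1 else 0) :=
      cnt_succ (swD s) i hik
    have hmono1 : cnt (swD s) i ≤ cnt (swD s) mid :=
      cnt_mono (show (i : ℕ) ≤ (i : ℕ) + 1 by omega)
    have hmono2 : cnt (swD s) mid ≤ cnt (swD s) i' :=
      cnt_mono (show (i : ℕ) + 1 ≤ (i' : ℕ) by omega)
    have hnot : (⟨(i : ℕ), hik⟩ : Fin k) ∉ swD s := by
      by_contra h'
      rw [if_pos h'] at h1
      omega
    have hs : s i = s mid := by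
      simp only [swD, Finset.mem_filter, Finset.mem_univ, true_and, not_not] at hnot
      have e1 : (Fin.castSucc ⟨(i : ℕ), hik⟩) = i := Fin.ext rfl
      have e2 : (Fin.succ ⟨(i : ℕ), hik⟩) = mid := Fin.ext rfl
      rw [e1, e2] at hnot
      exact hnot
    rw [hs]
    exact ih mid i' (show (i' : ℕ) = (i : ℕ) + 1 + d by omega) (by omega)

lemma block_const (s : Fin (k + 1) → 𝒮) (i i' : Fin (k + 1))
    (hc : cnt (swD s) i = cnt (swD s) i') : s i = s i' := by
  rcases le_total (i : ℕ) (i' : ℕ) with h | h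
  · exact block_const_aux s ((i' : ℕ) - (i : ℕ)) i i' (by omega) hc
  · exact (block_const_aux s ((i : ℕ) - (i' : ℕ)) i' i (by omega) hc.symm).symm

lemma switchCount_eq (s : Fin (k + 1) → 𝒮) : switchCount s = (swD s).card := by
  classical
  unfold switchCount swD
  rw [Finset.card_filter, Fin.sum_univ_castSucc]
  rw [dif_neg (by simp : ¬ ((Fin.last k : Fin (k+1)) : ℕ) + 1 < k + 1), add_zero]
  apply Finset.sum_congr rfl
  intro i _
  have hi : ((i.castSucc : Fin (k+1)) : ℕ) + 1 < k + 1 := by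
    simp
  rw [dif_pos hi]
  have e2 : (⟨((i.castSucc : Fin (k+1)) : ℕ) + 1, hi⟩ : Fin (k + 1)) = i.succ := Fin.ext (by simp)
  rw [e2]
  by_cases h : s i.castSucc = s i.succ <;> simp [h]

end Aux

/-- The number of sequences `s : Fin n → 𝒮` with switch count at most `m` is at most
`(Σ_{j=0}^{m} C(n-1, j)) · |𝒮|^(m+1)`. -/
theorem card_switching_le {𝒮 : Type*} [Fintype 𝒮] [DecidableEq 𝒮] [Nonempty 𝒮]
    (n m : ℕ) (hn : 1 ≤ n) (hm : m ≤ n - 1) :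
    (Finset.univ.filter (fun s : Fin n → 𝒮 => switchCount s ≤ m)).card ≤
      (∑ j ∈ Finset.range (m + 1), (n - 1).choose j) * Fintype.card 𝒮 ^ (m + 1) := by
  classical
  obtain ⟨k, rfl⟩ : ∃ k, n = k + 1 := ⟨n - 1, (Nat.succ_pred_eq_of_pos hn).symm⟩
  simp only [Nat.add_sub_cancel] at hm ⊢
  -- target finset
  set T : Finset (Finset (Fin k) × (Fin (m + 1) → 𝒮)) :=
    (Finset.univ.filter (fun S : Finset (Fin k) => S.card ≤ m)) ×ˢ Finset.univ with hT
  -- encoding map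
  set g : (Fin (k + 1) → 𝒮) → Fin (m + 1) → 𝒮 := fun s j =>
    if h : ∃ i : Fin (k + 1), cnt (swD s) i = (j : ℕ) then s h.choose
    else Classical.arbitrary 𝒮 with hg
  set E : (Fin (k + 1) → 𝒮) → Finset (Fin k) × (Fin (m + 1) → 𝒮) := fun s => (swD s, g s)
    with hE
  -- reconstruction: s i = g s ⟨cnt (swD s) i, _⟩ whenever (swD s).card ≤ m
  have hrec : ∀ s : Fin (k + 1) → 𝒮, ∀ hs : (swD s).card ≤ m, ∀ i : Fin (k + 1),
      s i = g s ⟨cnt (swD s) i, by have := cnt_le_card (swD s) i; omega⟩ := by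
    intro s hs i
    have hex : ∃ i0 : Fin (k + 1), cnt (swD s) i0 = cnt (swD s) i := ⟨i, rfl⟩
    simp only [hg]
    rw [dif_pos hex]
    exact block_const s i hex.choose hex.choose_spec.symm
  have hinj : Set.InjOn E (Finset.univ.filter
      (fun s : Fin (k + 1) → 𝒮 => switchCount s ≤ m)) := by
    intro s hs s' hs' hEq
    simp only [Finset.coe_filter, Set.mem_setOf_eq, switchCount_eq] at hs hs'
    have hD : swD s = swD s' := congrArg Prod.fst hEq
    have hgeq : g s = g s' := congrArg Prod.snd hEq
    funext i
    rw [hrec s hs.2 i, hrec s' hs'.2 i, hgeq]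
    congr 1
    exact Fin.ext (by simp [hD])
  have hmem : ∀ s ∈ Finset.univ.filter (fun s : Fin (k + 1) → 𝒮 => switchCount s ≤ m),
      E s ∈ T := by
    intro s hs
    simp only [Finset.mem_filter, Finset.mem_univ, true_and, switchCount_eq] at hs
    simp [hT, hE, hs]
  calc (Finset.univ.filter (fun s : Fin (k + 1) → 𝒮 => switchCount s ≤ m)).card
      ≤ T.card := Finset.card_le_card_of_injOn E hmem hinj
    _ = (Finset.univ.filter (fun S : Finset (Fin k) => S.card ≤ m)).card *
        (Finset.univ : Finset (Fin (m + 1) → 𝒮)).card := Finset.card_product _ _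
    _ ≤ (∑ j ∈ Finset.range (m + 1), k.choose j) * Fintype.card 𝒮 ^ (m + 1) := by
        apply Nat.mul_le_mul
        · have hsub : Finset.univ.filter (fun S : Finset (Fin k) => S.card ≤ m) ⊆
              (Finset.range (m + 1)).biUnion
                (fun j => Finset.powersetCard j (Finset.univ : Finset (Fin k))) := by
            intro S hS
            simp only [Finset.mem_filter, Finset.mem_univ, true_and] at hS
            simp only [Finset.mem_biUnion, Finset.mem_range, Finset.mem_powersetCard]
            exact ⟨S.card, by omega, Finset.subset_univ S, rfl⟩
          calc (Finset.univ.filter (fun S : Finset (Fin k) => S.card ≤ m)).card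
              ≤ _ := Finset.card_le_card hsub
            _ ≤ ∑ j ∈ Finset.range (m + 1),
                  (Finset.powersetCard j (Finset.univ : Finset (Fin k))).card :=
                Finset.card_biUnion_le
            _ = ∑ j ∈ Finset.range (m + 1), k.choose j := by
                apply Finset.sum_congr rfl
                intro j _
                simp [Finset.card_powersetCard]
        · rw [Finset.card_univ, Fintype.card_fun, Fintype.card_fin]
end

section
/- Let 𝒳, 𝒵, X̂ be nonempty finite sets and 𝒮 the set of all functions 𝒵 → X̂. Let Λ : 𝒳 × X̂ → [0,∞), let Π assign to each x ∈ 𝒳 a probability mass function Π(x,·) on 𝒵, let ℓ : 𝒵 × 𝒮 → ℝ be unbiased (Σ_z Π(x,z) ℓ(z,s) = Σ_z Π(x,z) Λ(x, s(z)) for all x, s), and let L_max > 0 satisfy |Λ(x, s(z)) − ℓ(z, s)| ≤ L_max for all x, z, s. Fix α ∈ (0,1) and set m_n = ⌊n^α⌋ for each n ≥ 1. For each n, fix a clean sequence x^{(n)} : Fin n → 𝒳, let F_n be the set of tuples S : Fin n → 𝒮 with switch count at most m_n, let Ŝ_n : 𝒵^n → F_n be any map such that Ŝ_n(z) minimizes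 Σ_{t=1}^n ℓ(z_t, S_t) over F_n for every z, and let D_n(z) = min over S ∈ F_n of (1/n) Σ_t Λ(x^{(n)}_t, S_t(z_t)). Let (Z^{(n)})_{n≥1} be a family of random vectors, on a common probability space, with Z^{(n)} distributed according to the product distribution with marginals Π(x^{(n)}_t, ·). Then almost surely, (1/n) Σ_{t=1}^n Λ(x^{(n)}_t, Ŝ_n(Z^{(n)})_t(Z^{(n)}_t)) − D_n(Z^{(n)}) → 0 as n → ∞. -/
open scoped Classical

open Finset

lemma exp_le_one_add_add_sq {t : ℝ} (ht : |t| ≤ 1) : Real.exp t ≤ 1 + t + t ^ 2 := by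
  have h := Real.exp_bound ht (n := 2) (by norm_num)
  have hs : ∑ m ∈ range 2, t ^ m / m.factorial = 1 + t := by
    simp [Finset.sum_range_succ]
  rw [hs] at h
  have h1 := (abs_sub_le_iff.1 h).1
  have h2 : |t| ^ 2 * ((2 : ℕ).succ / ((2 : ℕ).factorial * 2) : ℝ) ≤ t ^ 2 := by
    rw [sq_abs]
    have h3 : (((2 : ℕ).succ : ℝ) / ((2 : ℕ).factorial * 2) : ℝ) = 3 / 4 := by
      norm_num [Nat.factorial]
    rw [h3]
    nlinarith [sq_nonneg t]
  linarith

/-- Per-coordinate mgf bound. -/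
lemma coord_mgf {𝒵 : Type*} [Fintype 𝒵] (p g : 𝒵 → ℝ) (L lam : ℝ)
    (hp0 : ∀ z, 0 ≤ p z) (hp1 : ∑ z, p z = 1)
    (hg : ∀ z, |g z| ≤ L) (hmean : ∑ z, p z * g z = 0)
    (hlam : 0 ≤ lam) (hlamL : lam * L ≤ 1) :
    ∑ z, p z * Real.exp (lam * g z) ≤ Real.exp (lam ^ 2 * L ^ 2) := by
  have key : ∀ z, Real.exp (lam * g z) ≤ 1 + lam * g z + (lam * g z) ^ 2 := by
    intro z
    apply exp_le_one_add_add_sq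
    rw [abs_mul, abs_of_nonneg hlam]
    exact le_trans (mul_le_mul_of_nonneg_left (hg z) hlam) hlamL
  calc ∑ z, p z * Real.exp (lam * g z)
      ≤ ∑ z, p z * (1 + lam * g z + (lam * g z) ^ 2) :=
        Finset.sum_le_sum fun z _ => mul_le_mul_of_nonneg_left (key z) (hp0 z)
    _ = ∑ z, (p z + lam * (p z * g z) + lam ^ 2 * (p z * g z ^ 2)) := by
        apply Finset.sum_congr rfl; intro z _; ring
    _ = 1 + lam * (∑ z, p z * g z) + lam ^ 2 * ∑ z, p z * g z ^ 2 := by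
        rw [Finset.sum_add_distrib, Finset.sum_add_distrib, ← Finset.mul_sum, ← Finset.mul_sum,
          hp1]
    _ ≤ 1 + lam ^ 2 * L ^ 2 := by
        rw [hmean, mul_zero, add_zero]
        have h1 : ∑ z, p z * g z ^ 2 ≤ L ^ 2 := by
          have h2 : ∑ z, p z * g z ^ 2 ≤ ∑ z, p z * L ^ 2 :=
            Finset.sum_le_sum fun z _ => mul_le_mul_of_nonneg_left
              (by rw [← sq_abs]; exact pow_le_pow_left₀ (abs_nonneg _) (hg z) 2) (hp0 z)
          rwa [← Finset.sum_mul, hp1, one_mul] at h2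
        nlinarith [sq_nonneg lam]
    _ ≤ Real.exp (lam ^ 2 * L ^ 2) := by
        have := Real.add_one_le_exp (lam ^ 2 * L ^ 2); linarith

/-- One-sided Chernoff bound for a finite product measure. -/
lemma chernoff_one {𝒵 : Type*} [Fintype 𝒵] (n : ℕ)
    (p g : Fin n → 𝒵 → ℝ) (L lam a : ℝ)
    (hp0 : ∀ t z, 0 ≤ p t z) (hp1 : ∀ t, ∑ z, p t z = 1)
    (hg : ∀ t z, |g t z| ≤ L) (hmean : ∀ t, ∑ z, p t z * g t z = 0)
    (hlam : 0 ≤ lam) (hlamL : lam * L ≤ 1) :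
    ∑ z ∈ univ.filter (fun z : Fin n → 𝒵 => a ≤ ∑ t, g t (z t)), ∏ t, p t (z t)
      ≤ Real.exp ((n : ℝ) * (lam ^ 2 * L ^ 2) - lam * a) := by
  classical
  have hterm : ∀ z ∈ univ.filter (fun z : Fin n → 𝒵 => a ≤ ∑ t, g t (z t)),
      ∏ t, p t (z t) ≤ Real.exp (-(lam * a)) * ∏ t, (p t (z t) * Real.exp (lam * g t (z t))) := by
    intro z hz
    rw [Finset.mem_filter] at hz
    have hprod0 : 0 ≤ ∏ t, p t (z t) := Finset.prod_nonneg fun t _ => hp0 t (z t)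
    have h1 : (1 : ℝ) ≤ Real.exp (-(lam * a) + lam * ∑ t, g t (z t)) := by
      rw [← Real.exp_zero]
      apply Real.exp_le_exp.2
      nlinarith [mul_le_mul_of_nonneg_left hz.2 hlam]
    calc ∏ t, p t (z t) = (∏ t, p t (z t)) * 1 := by ring
      _ ≤ (∏ t, p t (z t)) * Real.exp (-(lam * a) + lam * ∑ t, g t (z t)) :=
          mul_le_mul_of_nonneg_left h1 hprod0
      _ = Real.exp (-(lam * a)) * ∏ t, (p t (z t) * Real.exp (lam * g t (z t))) := by
          rw [Finset.prod_mul_distrib, ← Real.exp_sum, Real.exp_add, Finset.mul_sum]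
          ring
  calc ∑ z ∈ univ.filter (fun z : Fin n → 𝒵 => a ≤ ∑ t, g t (z t)), ∏ t, p t (z t)
      ≤ ∑ z ∈ univ.filter (fun z : Fin n → 𝒵 => a ≤ ∑ t, g t (z t)),
          Real.exp (-(lam * a)) * ∏ t, (p t (z t) * Real.exp (lam * g t (z t))) :=
        Finset.sum_le_sum hterm
    _ ≤ ∑ z : Fin n → 𝒵,
          Real.exp (-(lam * a)) * ∏ t, (p t (z t) * Real.exp (lam * g t (z t))) := by
        apply Finset.sum_le_sum_of_subset_of_nonneg (Finset.filter_subset _ _)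
        intro z _ _
        have : 0 ≤ ∏ t, (p t (z t) * Real.exp (lam * g t (z t))) :=
          Finset.prod_nonneg fun t _ => mul_nonneg (hp0 t (z t)) (Real.exp_nonneg _)
        positivity
    _ = Real.exp (-(lam * a)) *
          ∑ z : Fin n → 𝒵, ∏ t, (p t (z t) * Real.exp (lam * g t (z t))) := by
        rw [Finset.mul_sum]
    _ = Real.exp (-(lam * a)) * ∏ t, ∑ ζ, (p t ζ * Real.exp (lam * g t ζ)) := by
        congr 1
        rw [Finset.prod_univ_sum, Fintype.piFinset_univ]
    _ ≤ Real.exp (-(lam * a)) * ∏ t : Fin n, Real.exp (lam ^ 2 * L ^ 2) := by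
        apply mul_le_mul_of_nonneg_left _ (Real.exp_nonneg _)
        apply Finset.prod_le_prod
        · intro t _
          exact Finset.sum_nonneg fun ζ _ => mul_nonneg (hp0 t ζ) (Real.exp_nonneg _)
        · intro t _
          exact coord_mgf (p t) (g t) L lam (hp0 t) (hp1 t) (hg t) (hmean t) hlam hlamL
    _ = Real.exp ((n : ℝ) * (lam ^ 2 * L ^ 2) - lam * a) := by
        rw [Finset.prod_const, Finset.card_univ, Fintype.card_fin, ← Real.exp_nat_mul,
          ← Real.exp_add]
        congr 1
        ring

/-- Two-sided Chernoff bound. -/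
lemma chernoff_two {𝒵 : Type*} [Fintype 𝒵] (n : ℕ)
    (p g : Fin n → 𝒵 → ℝ) (L lam a : ℝ)
    (hp0 : ∀ t z, 0 ≤ p t z) (hp1 : ∀ t, ∑ z, p t z = 1)
    (hg : ∀ t z, |g t z| ≤ L) (hmean : ∀ t, ∑ z, p t z * g t z = 0)
    (hlam : 0 ≤ lam) (hlamL : lam * L ≤ 1) :
    ∑ z ∈ univ.filter (fun z : Fin n → 𝒵 => a ≤ |∑ t, g t (z t)|), ∏ t, p t (z t)
      ≤ 2 * Real.exp ((n : ℝ) * (lam ^ 2 * L ^ 2) - lam * a) := by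
  classical
  have h1 := chernoff_one n p g L lam a hp0 hp1 hg hmean hlam hlamL
  have h2 := chernoff_one n p (fun t ζ => -(g t ζ)) L lam a hp0 hp1
    (fun t z => by rw [abs_neg]; exact hg t z)
    (fun t => by simp only [mul_neg]; rw [Finset.sum_neg_distrib, hmean t, neg_zero])
    hlam hlamL
  have hnn : ∀ z : Fin n → 𝒵, 0 ≤ ∏ t, p t (z t) :=
    fun z => Finset.prod_nonneg fun t _ => hp0 t (z t)
  have hsub : univ.filter (fun z : Fin n → 𝒵 => a ≤ |∑ t, g t (z t)|) ⊆
      univ.filter (fun z : Fin n → 𝒵 => a ≤ ∑ t, g t (z t)) ∪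
      univ.filter (fun z : Fin n → 𝒵 => a ≤ ∑ t, -(g t (z t))) := by
    intro z hz
    rw [Finset.mem_filter] at hz
    rw [Finset.mem_union, Finset.mem_filter, Finset.mem_filter]
    rcases le_abs.1 hz.2 with h | h
    · exact Or.inl ⟨hz.1, h⟩
    · refine Or.inr ⟨hz.1, ?_⟩
      rw [Finset.sum_neg_distrib]
      exact h
  calc ∑ z ∈ univ.filter (fun z : Fin n → 𝒵 => a ≤ |∑ t, g t (z t)|), ∏ t, p t (z t)
      ≤ ∑ z ∈ (univ.filter (fun z : Fin n → 𝒵 => a ≤ ∑ t, g t (z t)) ∪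
          univ.filter (fun z : Fin n → 𝒵 => a ≤ ∑ t, -(g t (z t)))), ∏ t, p t (z t) :=
        Finset.sum_le_sum_of_subset_of_nonneg hsub (fun z _ _ => hnn z)
    _ ≤ (∑ z ∈ univ.filter (fun z : Fin n → 𝒵 => a ≤ ∑ t, g t (z t)), ∏ t, p t (z t)) +
        ∑ z ∈ univ.filter (fun z : Fin n → 𝒵 => a ≤ ∑ t, -(g t (z t))), ∏ t, p t (z t) := by
        rw [← Finset.union_sdiff_self_eq_union, Finset.sum_union Finset.disjoint_sdiff]
        apply add_le_add le_rfl
        exact Finset.sum_le_sum_of_subset_of_nonneg Finset.sdiff_subset (fun z _ _ => hnn z)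
    _ ≤ Real.exp ((n : ℝ) * (lam ^ 2 * L ^ 2) - lam * a) +
        Real.exp ((n : ℝ) * (lam ^ 2 * L ^ 2) - lam * a) := add_le_add h1 h2
    _ = 2 * Real.exp ((n : ℝ) * (lam ^ 2 * L ^ 2) - lam * a) := by ring

lemma switchCount_eq_card {𝒮 : Type*} {n : ℕ} (f : Fin n → 𝒮) :
    switchCount f =
      (univ.filter (fun i : Fin n => ∃ h : (i : ℕ) + 1 < n, f i ≠ f ⟨(i : ℕ) + 1, h⟩)).card := by
  classical
  rw [Finset.card_filter]
  unfold switchCount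
  apply Finset.sum_congr rfl
  intro i _
  by_cases h : (i : ℕ) + 1 < n
  · rw [dif_pos h]
    by_cases he : f i = f ⟨(i : ℕ) + 1, h⟩
    · rw [if_pos he, if_neg]
      rintro ⟨h', hne⟩
      exact hne he
    · rw [if_neg he, if_pos ⟨h, he⟩]
  · rw [dif_neg h, if_neg]
    rintro ⟨h', -⟩
    exact h h'

lemma card_low_switch {𝒮 : Type*} [Fintype 𝒮] [Nonempty 𝒮] {n : ℕ} (hn : 0 < n) (m : ℕ) :
    (univ.filter (fun f : Fin n → 𝒮 => switchCount f ≤ m)).card ≤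
      Fintype.card 𝒮 * ((m + 1) * (n * Fintype.card 𝒮) ^ m) := by
  classical
  set N := Fintype.card 𝒮 with hN
  let nxt : (Fin n → 𝒮) → Fin n → 𝒮 :=
    fun f i => if h : (i : ℕ) + 1 < n then f ⟨(i : ℕ) + 1, h⟩ else f i
  let sw : (Fin n → 𝒮) → Finset (Fin n) :=
    fun f => univ.filter (fun i => (i : ℕ) + 1 < n ∧ f i ≠ nxt f i)
  let enc : (Fin n → 𝒮) → 𝒮 × Finset (Fin n × 𝒮) :=
    fun f => (f ⟨0, hn⟩, (sw f).image (fun i => (i, nxt f i)))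
  have hsw_card : ∀ f : Fin n → 𝒮, (sw f).card = switchCount f := by
    intro f
    rw [switchCount_eq_card]
    congr 1
    apply Finset.filter_congr
    intro i _
    constructor
    · rintro ⟨h, hne⟩
      refine ⟨h, ?_⟩
      simpa [nxt, dif_pos h] using hne
    · rintro ⟨h, hne⟩
      exact ⟨h, by simpa [nxt, dif_pos h] using hne⟩
  have key : ∀ f g : Fin n → 𝒮, enc f = enc g → f = g := by
    have sub : ∀ f g : Fin n → 𝒮, enc f = enc g → ∀ k (hk : k + 1 < n),
        g ⟨k, Nat.lt_of_succ_lt hk⟩ ≠ g ⟨k + 1, hk⟩ → f ⟨k + 1, hk⟩ = g ⟨k + 1, hk⟩ := by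
      intro f g h k hk hgk
      have hA : (sw f).image (fun i => (i, nxt f i)) = (sw g).image (fun i => (i, nxt g i)) :=
        congrArg Prod.snd h
      have hk' : k < n := Nat.lt_of_succ_lt hk
      have hmemg : (⟨k, hk'⟩ : Fin n) ∈ sw g := by
        refine Finset.mem_filter.2 ⟨Finset.mem_univ _, hk, ?_⟩
        simpa [nxt, dif_pos hk] using hgk
      have hpair : ((⟨k, hk'⟩ : Fin n), nxt g ⟨k, hk'⟩) ∈ (sw f).image (fun i => (i, nxt f i)) := by
        rw [hA]
        exact Finset.mem_image_of_mem _ hmemg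
      obtain ⟨j, hj, hje⟩ := Finset.mem_image.1 hpair
      have hj1 : j = (⟨k, hk'⟩ : Fin n) := congrArg Prod.fst hje
      have hj2 : nxt f (⟨k, hk'⟩ : Fin n) = nxt g (⟨k, hk'⟩ : Fin n) := by
        have h2' : nxt f j = nxt g (⟨k, hk'⟩ : Fin n) := congrArg Prod.snd hje
        rwa [hj1] at h2'
      have e1 : nxt f (⟨k, hk'⟩ : Fin n) = f ⟨k + 1, hk⟩ := by simp [nxt, dif_pos hk]
      have e2 : nxt g (⟨k, hk'⟩ : Fin n) = g ⟨k + 1, hk⟩ := by simp [nxt, dif_pos hk]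
      rw [← e1, hj2, e2]
    intro f g h
    have h0 : f ⟨0, hn⟩ = g ⟨0, hn⟩ := congrArg Prod.fst h
    have main : ∀ k, ∀ hk : k < n, f ⟨k, hk⟩ = g ⟨k, hk⟩ := by
      intro k
      induction k with
      | zero => intro hk; exact h0
      | succ k ih =>
        intro hk
        have hk' : k < n := Nat.lt_of_succ_lt hk
        by_cases hgc : g ⟨k, hk'⟩ = g ⟨k + 1, hk⟩
        · by_cases hfc : f ⟨k, hk'⟩ = f ⟨k + 1, hk⟩
          · rw [← hfc, ← hgc]; exact ih hk'
          · exact (sub g f h.symm k hk hfc).symm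
        · exact sub f g h k hk hgc
    funext i
    exact main i.1 i.2
  let T : Finset (Finset (Fin n × 𝒮)) :=
    (Finset.range (m + 1)).biUnion (fun k => Finset.powersetCard k univ)
  have hmaps : ∀ f ∈ univ.filter (fun f : Fin n → 𝒮 => switchCount f ≤ m),
      enc f ∈ (univ : Finset 𝒮) ×ˢ T := by
    intro f hf
    rw [Finset.mem_filter] at hf
    rw [Finset.mem_product]
    refine ⟨Finset.mem_univ _, ?_⟩
    rw [Finset.mem_biUnion]
    refine ⟨((sw f).image (fun i => (i, nxt f i))).card, ?_, ?_⟩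
    · rw [Finset.mem_range, Nat.lt_succ_iff]
      calc ((sw f).image (fun i => (i, nxt f i))).card ≤ (sw f).card := Finset.card_image_le
        _ = switchCount f := hsw_card f
        _ ≤ m := hf.2
    · rw [Finset.mem_powersetCard]
      exact ⟨Finset.subset_univ _, rfl⟩
  have hinj : Set.InjOn enc ↑(univ.filter (fun f : Fin n → 𝒮 => switchCount f ≤ m)) :=
    fun f _ g _ h => key f g h
  have hcard := Finset.card_le_card_of_injOn enc hmaps hinj
  have hT : T.card ≤ (m + 1) * (n * N) ^ m := by
    calc T.card ≤ ∑ k ∈ Finset.range (m + 1),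
          (Finset.powersetCard k (univ : Finset (Fin n × 𝒮))).card := Finset.card_biUnion_le
      _ ≤ ∑ _k ∈ Finset.range (m + 1), (n * N) ^ m := by
          apply Finset.sum_le_sum
          intro k hk
          rw [Finset.card_powersetCard, Finset.card_univ, Fintype.card_prod, Fintype.card_fin]
          calc (n * N).choose k ≤ (n * N) ^ k := Nat.choose_le_pow _ _
            _ ≤ (n * N) ^ m := Nat.pow_le_pow_right
                (Nat.mul_pos hn Fintype.card_pos)
                (Nat.lt_succ_iff.1 (Finset.mem_range.1 hk))
      _ = (m + 1) * (n * N) ^ m := by rw [Finset.sum_const, Finset.card_range, smul_eq_mul]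
  calc (univ.filter (fun f : Fin n → 𝒮 => switchCount f ≤ m)).card
      ≤ ((univ : Finset 𝒮) ×ˢ T).card := hcard
    _ = N * T.card := by rw [Finset.card_product, Finset.card_univ]
    _ ≤ N * ((m + 1) * (n * N) ^ m) := Nat.mul_le_mul_left _ hT

lemma growth {α : ℝ} (hα0 : 0 < α) (hα1 : α < 1) (A : ℕ) (hA : 1 ≤ A) (c : ℝ) (hc : 0 < c) :
    ∀ᶠ n : ℕ in Filter.atTop,
      ((A * ((⌊(n : ℝ) ^ α⌋₊ + 1) * (n * A) ^ ⌊(n : ℝ) ^ α⌋₊) : ℕ) : ℝ) ≤ Real.exp (c * n) := by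
  set δ := (1 - α) / 2 with hδdef
  have hδ : 0 < δ := by rw [hδdef]; linarith
  set C := 3 * ((A : ℝ) + 2) ^ δ / δ with hCdef
  have htend : Filter.Tendsto (fun n : ℕ => ((n : ℝ)) ^ δ) Filter.atTop Filter.atTop :=
    (tendsto_rpow_atTop hδ).comp tendsto_natCast_atTop_atTop
  filter_upwards [htend.eventually_ge_atTop (C / c), Filter.eventually_ge_atTop 1] with n h1 h2
  have hn1 : (1 : ℝ) ≤ (n : ℝ) := by exact_mod_cast h2
  have hnpos : (0 : ℝ) < (n : ℝ) := lt_of_lt_of_le zero_lt_one hn1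
  have hA1 : (1 : ℝ) ≤ (A : ℝ) := by exact_mod_cast hA
  set M := ⌊(n : ℝ) ^ α⌋₊ with hM
  have hm : (M : ℝ) ≤ (n : ℝ) ^ α := Nat.floor_le (Real.rpow_nonneg hnpos.le α)
  have hge1 : (1 : ℝ) ≤ (n : ℝ) ^ α := by
    calc (1 : ℝ) = (n : ℝ) ^ (0 : ℝ) := (Real.rpow_zero _).symm
      _ ≤ (n : ℝ) ^ α := Real.rpow_le_rpow_of_exponent_le hn1 hα0.le
  have hna : (n : ℝ) ^ α ≤ (n : ℝ) := by
    calc (n : ℝ) ^ α ≤ (n : ℝ) ^ (1 : ℝ) := Real.rpow_le_rpow_of_exponent_le hn1 hα1.le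
      _ = (n : ℝ) := Real.rpow_one _
  set B := (n : ℝ) * (A : ℝ) + 2 with hB
  have hnA0 : (0 : ℝ) ≤ (n : ℝ) * (A : ℝ) := by positivity
  have hB2 : (2 : ℝ) ≤ B := by rw [hB]; linarith
  have hBpos : (0 : ℝ) < B := by linarith
  have hAB : (A : ℝ) ≤ B := by
    have : (A : ℝ) ≤ (n : ℝ) * (A : ℝ) := le_mul_of_one_le_left (by positivity) hn1
    rw [hB]; linarith
  have hMB : ((M : ℝ) + 1) ≤ B := by
    have h3 : (n : ℝ) ≤ (n : ℝ) * (A : ℝ) := le_mul_of_one_le_right hnpos.le hA1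
    rw [hB]; linarith
  have hnAB : ((n : ℝ) * (A : ℝ)) ^ M ≤ B ^ M :=
    pow_le_pow_left₀ (by positivity) (by rw [hB]; linarith) M
  have hd : ((A * ((M + 1) * (n * A) ^ M) : ℕ) : ℝ) ≤ B ^ (M + 2) := by
    push_cast
    calc (A : ℝ) * (((M : ℝ) + 1) * ((n : ℝ) * (A : ℝ)) ^ M)
        ≤ B * (B * B ^ M) := by
          apply mul_le_mul hAB _ (by positivity) hBpos.le
          exact mul_le_mul hMB hnAB (by positivity) hBpos.le
      _ = B ^ (M + 2) := by ring
  have hexp : B ^ (M + 2) = Real.exp (((M + 2 : ℕ) : ℝ) * Real.log B) := by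
    rw [← Real.log_pow, Real.exp_log (by positivity)]
  have hstep3 : ((M + 2 : ℕ) : ℝ) * Real.log B ≤ c * n := by
    have hm2 : ((M : ℝ) + 2) ≤ 3 * (n : ℝ) ^ α := by linarith
    have hlog : Real.log B ≤ B ^ δ / δ := Real.log_le_rpow_div hBpos.le hδ
    have hBn : B ≤ (n : ℝ) * ((A : ℝ) + 2) := by rw [hB]; nlinarith
    have hBδ : B ^ δ ≤ ((n : ℝ) * ((A : ℝ) + 2)) ^ δ :=
      Real.rpow_le_rpow hBpos.le hBn hδ.le
    have hsplit : ((n : ℝ) * ((A : ℝ) + 2)) ^ δ = (n : ℝ) ^ δ * ((A : ℝ) + 2) ^ δ :=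
      Real.mul_rpow hnpos.le (by positivity)
    have h4 : Real.log B ≤ (n : ℝ) ^ δ * ((A : ℝ) + 2) ^ δ / δ := by
      refine le_trans hlog ((div_le_div_iff_of_pos_right hδ).2 ?_)
      rw [← hsplit]; exact hBδ
    have hlogB0 : 0 ≤ Real.log B := Real.log_nonneg (by linarith)
    have h5 : ((M + 2 : ℕ) : ℝ) * Real.log B ≤
        (3 * (n : ℝ) ^ α) * ((n : ℝ) ^ δ * ((A : ℝ) + 2) ^ δ / δ) := by
      push_cast
      exact mul_le_mul hm2 h4 hlogB0 (by positivity)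
    have h7 : (n : ℝ) ^ α * (n : ℝ) ^ δ = (n : ℝ) ^ (α + δ) := (Real.rpow_add hnpos α δ).symm
    have h6 : (3 * (n : ℝ) ^ α) * ((n : ℝ) ^ δ * ((A : ℝ) + 2) ^ δ / δ) =
        C * ((n : ℝ) ^ α * (n : ℝ) ^ δ) := by rw [hCdef]; ring
    have hsum1 : α + δ + δ = 1 := by rw [hδdef]; ring
    have hsplitn : (n : ℝ) = (n : ℝ) ^ (α + δ) * (n : ℝ) ^ δ := by
      calc (n : ℝ) = (n : ℝ) ^ (1 : ℝ) := (Real.rpow_one _).symm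
        _ = (n : ℝ) ^ (α + δ + δ) := by rw [hsum1]
        _ = (n : ℝ) ^ (α + δ) * (n : ℝ) ^ δ := Real.rpow_add hnpos _ _
    have h8 : C ≤ c * (n : ℝ) ^ δ := by
      rw [← div_le_iff₀' hc]
      exact h1
    have h9 : C * (n : ℝ) ^ (α + δ) ≤ c * (n : ℝ) := by
      calc C * (n : ℝ) ^ (α + δ) ≤ (c * (n : ℝ) ^ δ) * (n : ℝ) ^ (α + δ) :=
            mul_le_mul_of_nonneg_right h8 (Real.rpow_nonneg hnpos.le _)
        _ = c * ((n : ℝ) ^ (α + δ) * (n : ℝ) ^ δ) := by ring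
        _ = c * (n : ℝ) := by rw [← hsplitn]
    calc ((M + 2 : ℕ) : ℝ) * Real.log B
        ≤ (3 * (n : ℝ) ^ α) * ((n : ℝ) ^ δ * ((A : ℝ) + 2) ^ δ / δ) := h5
      _ = C * ((n : ℝ) ^ α * (n : ℝ) ^ δ) := h6
      _ = C * (n : ℝ) ^ (α + δ) := by rw [h7]
      _ ≤ c * (n : ℝ) := h9
  calc ((A * ((M + 1) * (n * A) ^ M) : ℕ) : ℝ) ≤ B ^ (M + 2) := hd
    _ = Real.exp (((M + 2 : ℕ) : ℝ) * Real.log B) := hexp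
    _ ≤ Real.exp (c * n) := Real.exp_le_exp.2 hstep3

lemma summable_aux {α : ℝ} (hα0 : 0 < α) (hα1 : α < 1) (A : ℕ) (hA : 1 ≤ A)
    (c0 : ℝ) (hc : 0 < c0) :
    Summable (fun n : ℕ =>
      ((A * ((⌊(n : ℝ) ^ α⌋₊ + 1) * (n * A) ^ ⌊(n : ℝ) ^ α⌋₊) : ℕ) : ℝ) *
        (2 * Real.exp (-(c0 * n)))) := by
  have hg := growth hα0 hα1 A hA (c0 / 2) (half_pos hc)
  have hsumg : Summable (fun n : ℕ => Real.exp (-(c0 / 2) * n)) := by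
    have : (fun n : ℕ => Real.exp (-(c0 / 2) * n)) = fun n : ℕ => (Real.exp (-(c0 / 2))) ^ n := by
      funext n
      rw [← Real.exp_nat_mul]
      congr 1
      ring
    rw [this]
    exact summable_geometric_of_lt_one (Real.exp_nonneg _)
      (Real.exp_lt_one_iff.2 (by linarith))
  apply summable_of_isBigO_nat hsumg
  rw [Asymptotics.isBigO_iff]
  refine ⟨2, ?_⟩
  filter_upwards [hg] with n hn
  rw [Real.norm_eq_abs, Real.norm_eq_abs, abs_of_nonneg (by positivity),
    abs_of_nonneg (Real.exp_nonneg _)]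
  calc ((A * ((⌊(n : ℝ) ^ α⌋₊ + 1) * (n * A) ^ ⌊(n : ℝ) ^ α⌋₊) : ℕ) : ℝ) *
        (2 * Real.exp (-(c0 * n)))
      ≤ Real.exp (c0 / 2 * n) * (2 * Real.exp (-(c0 * n))) :=
        mul_le_mul_of_nonneg_right hn (by positivity)
    _ = 2 * Real.exp (-(c0 / 2) * n) := by
        rw [show Real.exp (c0 / 2 * n) * (2 * Real.exp (-(c0 * n))) =
          2 * (Real.exp (c0 / 2 * n) * Real.exp (-(c0 * n))) from by ring, ← Real.exp_add]
        congr 2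
        ring

/-- The (nonnegative) excess loss of the estimated-loss minimizer over the best
`m_n`-switching denoiser, as a function of the noisy sequence. -/
noncomputable def gapZ {𝒳 𝒵 Xhat : Type*} [Fintype 𝒵] [Fintype Xhat]
    (Λ : 𝒳 → Xhat → ℝ) (α : ℝ) (x : (n : ℕ) → Fin n → 𝒳)
    (Shat : (n : ℕ) → (Fin n → 𝒵) → (Fin n → 𝒵 → Xhat)) (n : ℕ) (z : Fin n → 𝒵) : ℝ :=
  (1 / (n : ℝ)) * ∑ t, Λ (x n t) (Shat n z t (z t)) -
    sInf ((fun S : Fin n → 𝒵 → Xhat =>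
        (1 / (n : ℝ)) * ∑ t, Λ (x n t) (S t (z t))) ''
      {S | switchCount S ≤ ⌊(n : ℝ) ^ α⌋₊})

/-- Universality (Theorem 4, single-symbol case): with `m_n = ⌊n^α⌋`, `α < 1`, and noisy
data drawn from the discrete memoryless channel with marginals `P(x^{(n)}_t, ·)`, the
estimated-loss-minimizing shifting denoiser almost surely asymptotically attains the
performance of the best combination of single-symbol denoisers with at most `m_n`
switches, regardless of the underlying clean data. -/
theorem sdude_universal {𝒳 𝒵 Xhat : Type*}
    [Fintype 𝒳] [Fintype 𝒵] [Fintype Xhat] [Nonempty 𝒳] [Nonempty 𝒵] [Nonempty Xhat]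
    (Λ : 𝒳 → Xhat → ℝ) (hΛ : ∀ x xh, 0 ≤ Λ x xh)
    (P : 𝒳 → 𝒵 → ℝ) (hP0 : ∀ x z, 0 ≤ P x z) (hP1 : ∀ x, ∑ z, P x z = 1)
    (ℓ : 𝒵 → (𝒵 → Xhat) → ℝ)
    (hunbiased : ∀ (x : 𝒳) (s : 𝒵 → Xhat),
      ∑ z, P x z * ℓ z s = ∑ z, P x z * Λ x (s z))
    (Lmax : ℝ) (hLmax : 0 < Lmax)
    (hbound : ∀ (x : 𝒳) (z : 𝒵) (s : 𝒵 → Xhat), |Λ x (s z) - ℓ z s| ≤ Lmax)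
    (α : ℝ) (hα : α ∈ Set.Ioo (0 : ℝ) 1)
    (x : (n : ℕ) → Fin n → 𝒳)
    (Shat : (n : ℕ) → (Fin n → 𝒵) → (Fin n → 𝒵 → Xhat))
    (hShatMem : ∀ (n : ℕ) (z : Fin n → 𝒵), switchCount (Shat n z) ≤ ⌊(n : ℝ) ^ α⌋₊)
    (hShatMin : ∀ (n : ℕ) (z : Fin n → 𝒵) (S : Fin n → 𝒵 → Xhat),
      switchCount S ≤ ⌊(n : ℝ) ^ α⌋₊ →
      ∑ t, ℓ (z t) (Shat n z t) ≤ ∑ t, ℓ (z t) (S t))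
    {Ω : Type*} [MeasurableSpace Ω] (μ : MeasureTheory.Measure Ω)
    [MeasureTheory.IsProbabilityMeasure μ]
    (Zr : (n : ℕ) → Ω → (Fin n → 𝒵))
    (hZ : ∀ (n : ℕ) (z : Fin n → 𝒵),
      μ {ω | Zr n ω = z} = ENNReal.ofReal (∏ t, P (x n t) (z t))) :
    ∀ᵐ ω ∂μ, Filter.Tendsto (fun n : ℕ =>
        (1 / (n : ℝ)) * ∑ t, Λ (x n t) (Shat n (Zr n ω) t (Zr n ω t)) -
          sInf ((fun S : Fin n → 𝒵 → Xhat =>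
              (1 / (n : ℝ)) * ∑ t, Λ (x n t) (S t (Zr n ω t))) ''
            {S | switchCount S ≤ ⌊(n : ℝ) ^ α⌋₊}))
      Filter.atTop (nhds 0) := by
  classical
  obtain ⟨hα0, hα1⟩ := hα
  -- Step 0: the gap is always nonnegative.
  have hgap0 : ∀ (n : ℕ) (z : Fin n → 𝒵), 0 ≤ gapZ Λ α x Shat n z := by
    intro n z
    unfold gapZ
    rw [sub_nonneg]
    apply csInf_le
    · exact (Set.toFinite _).image _ |>.bddBelow
    · exact ⟨Shat n z, hShatMem n z, rfl⟩
  -- Step 0': the gap at n = 0 is zero.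
  have hgap_zero : ∀ z : Fin 0 → 𝒵, gapZ Λ α x Shat 0 z = 0 := by
    intro z
    unfold gapZ
    have himg : ((fun S : Fin 0 → 𝒵 → Xhat =>
        (1 / ((0 : ℕ) : ℝ)) * ∑ t, Λ (x 0 t) (S t (z t))) ''
        {S | switchCount S ≤ ⌊((0 : ℕ) : ℝ) ^ α⌋₊}) = {0} := by
      apply Set.eq_singleton_iff_unique_mem.2
      constructor
      · refine ⟨fun _ _ => Classical.arbitrary Xhat, ?_, by simp⟩
        show switchCount _ ≤ _
        have : switchCount (fun _ _ => Classical.arbitrary Xhat : Fin 0 → 𝒵 → Xhat) = 0 := by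
          unfold switchCount
          simp
        rw [this]
        exact Nat.zero_le _
      · rintro r ⟨S, -, rfl⟩
        simp
    rw [himg, csInf_singleton]
    simp
  -- Step 1: deviation implies a large empirical deviation for some admissible S.
  have key2 : ∀ (n : ℕ), 0 < n → ∀ (z : Fin n → 𝒵) (ε : ℝ), 0 < ε →
      ε < gapZ Λ α x Shat n z →
      ∃ S : Fin n → 𝒵 → Xhat, switchCount S ≤ ⌊(n : ℝ) ^ α⌋₊ ∧
        (n : ℝ) * ε / 2 ≤ |∑ t, (Λ (x n t) (S t (z t)) - ℓ (z t) (S t))| := by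
    intro n hn z ε hε hgap
    have hnR : (0 : ℝ) < (n : ℝ) := by exact_mod_cast hn
    obtain ⟨Sstar, hSstar_mem, hSstar_val⟩ :
        ∃ S : Fin n → 𝒵 → Xhat, switchCount S ≤ ⌊(n : ℝ) ^ α⌋₊ ∧
          (1 / (n : ℝ)) * ∑ t, Λ (x n t) (S t (z t)) =
            sInf ((fun S : Fin n → 𝒵 → Xhat =>
                (1 / (n : ℝ)) * ∑ t, Λ (x n t) (S t (z t))) ''
              {S | switchCount S ≤ ⌊(n : ℝ) ^ α⌋₊}) := by
      have hne : ((fun S : Fin n → 𝒵 → Xhat =>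
          (1 / (n : ℝ)) * ∑ t, Λ (x n t) (S t (z t))) ''
          {S | switchCount S ≤ ⌊(n : ℝ) ^ α⌋₊}).Nonempty :=
        ⟨_, ⟨Shat n z, hShatMem n z, rfl⟩⟩
      obtain ⟨S, hS, hval⟩ := hne.csInf_mem (Set.toFinite _)
      exact ⟨S, hS, hval⟩
    unfold gapZ at hgap
    rw [← hSstar_val] at hgap
    have hinv : (n : ℝ) * (1 / (n : ℝ)) = 1 := by field_simp
    have h2 := mul_lt_mul_of_pos_left hgap hnR
    rw [mul_sub, ← mul_assoc, ← mul_assoc, hinv, one_mul, one_mul] at h2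
    have hmin := hShatMin n z Sstar hSstar_mem
    have hd1 : ∑ t, (Λ (x n t) (Shat n z t (z t)) - ℓ (z t) (Shat n z t)) =
        ∑ t, Λ (x n t) (Shat n z t (z t)) - ∑ t, ℓ (z t) (Shat n z t) :=
      Finset.sum_sub_distrib _ _
    have hd2 : ∑ t, (Λ (x n t) (Sstar t (z t)) - ℓ (z t) (Sstar t)) =
        ∑ t, Λ (x n t) (Sstar t (z t)) - ∑ t, ℓ (z t) (Sstar t) :=
      Finset.sum_sub_distrib _ _
    by_cases hc : (n : ℝ) * ε / 2 ≤
        |∑ t, (Λ (x n t) (Shat n z t (z t)) - ℓ (z t) (Shat n z t))|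
    · exact ⟨Shat n z, hShatMem n z, hc⟩
    · push_neg at hc
      refine ⟨Sstar, hSstar_mem, ?_⟩
      have hup := lt_of_abs_lt hc
      rw [hd1] at hup
      have hneg : ∑ t, (Λ (x n t) (Sstar t (z t)) - ℓ (z t) (Sstar t)) ≤
          -((n : ℝ) * ε / 2) := by
        rw [hd2]
        linarith
      calc (n : ℝ) * ε / 2 ≤ -(∑ t, (Λ (x n t) (Sstar t (z t)) - ℓ (z t) (Sstar t))) := by
            linarith
        _ ≤ |∑ t, (Λ (x n t) (Sstar t (z t)) - ℓ (z t) (Sstar t))| := neg_le_abs _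
  -- Step 2: Borel–Cantelli for each fixed ε.
  have hBC : ∀ ε : ℝ, 0 < ε →
      ∀ᵐ ω ∂μ, ∀ᶠ n in Filter.atTop, gapZ Λ α x Shat n (Zr n ω) ≤ ε := by
    intro ε hε
    set lam := min (ε / (4 * Lmax ^ 2)) (1 / Lmax) with hlamdef
    have hlampos : 0 < lam := lt_min (by positivity) (by positivity)
    set c0 := lam * ε / 4 with hc0def
    have hc0 : 0 < c0 := by positivity
    have hlamL : lam * Lmax ≤ 1 := by
      have h := min_le_right (ε / (4 * Lmax ^ 2)) (1 / Lmax)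
      calc lam * Lmax ≤ (1 / Lmax) * Lmax := mul_le_mul_of_nonneg_right h hLmax.le
        _ = 1 := by field_simp
    have hlamsq : lam ^ 2 * Lmax ^ 2 ≤ lam * ε / 4 := by
      have h := min_le_left (ε / (4 * Lmax ^ 2)) (1 / Lmax)
      have hL2 : (0 : ℝ) < Lmax ^ 2 := by positivity
      calc lam ^ 2 * Lmax ^ 2 = (lam * Lmax ^ 2) * lam := by ring
        _ ≤ (lam * Lmax ^ 2) * (ε / (4 * Lmax ^ 2)) :=
            mul_le_mul_of_nonneg_left h (by positivity)
        _ = lam * ε / 4 := by field_simp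
    set A := Fintype.card (𝒵 → Xhat) with hAdef
    have hA1 : 1 ≤ A := Fintype.card_pos
    set d : ℕ → ℕ := fun n => A * ((⌊(n : ℝ) ^ α⌋₊ + 1) * (n * A) ^ ⌊(n : ℝ) ^ α⌋₊) with hddef
    have hsum : Summable (fun n : ℕ => ((d n : ℕ) : ℝ) * (2 * Real.exp (-(c0 * n)))) :=
      summable_aux hα0 hα1 A hA1 c0 hc0
    -- measure bound for positive n
    have hbound_n : ∀ n : ℕ, 0 < n →
        μ {ω | ε < gapZ Λ α x Shat n (Zr n ω)} ≤
          ENNReal.ofReal (((d n : ℕ) : ℝ) * (2 * Real.exp (-(c0 * n)))) := by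
      intro n hn
      have hnR : (0 : ℝ) < (n : ℝ) := by exact_mod_cast hn
      set Fset : Finset (Fin n → 𝒵 → Xhat) :=
        Finset.univ.filter (fun S => switchCount S ≤ ⌊(n : ℝ) ^ α⌋₊) with hFset
      set dev : (Fin n → 𝒵 → Xhat) → Finset (Fin n → 𝒵) := fun S =>
        Finset.univ.filter (fun z : Fin n → 𝒵 =>
          (n : ℝ) * ε / 2 ≤ |∑ t, (Λ (x n t) (S t (z t)) - ℓ (z t) (S t))|) with hdev
      have hsub : {ω | ε < gapZ Λ α x Shat n (Zr n ω)} ⊆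
          ⋃ S ∈ Fset, {ω | Zr n ω ∈ dev S} := by
        intro ω hω
        obtain ⟨S, hS1, hS2⟩ := key2 n hn (Zr n ω) ε hε hω
        simp only [Set.mem_iUnion]
        exact ⟨S, Finset.mem_filter.2 ⟨Finset.mem_univ _, hS1⟩,
          Finset.mem_filter.2 ⟨Finset.mem_univ _, hS2⟩⟩
      have hdev_bound : ∀ S : Fin n → 𝒵 → Xhat,
          μ {ω | Zr n ω ∈ dev S} ≤ ENNReal.ofReal (2 * Real.exp (-(c0 * n))) := by
        intro S
        have hA1' : {ω | Zr n ω ∈ dev S} ⊆ ⋃ z ∈ dev S, {ω | Zr n ω = z} :=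
          fun ω hω => Set.mem_biUnion hω rfl
        have hA2 : μ {ω | Zr n ω ∈ dev S} ≤
            ∑ z ∈ dev S, ENNReal.ofReal (∏ t, P (x n t) (z t)) := by
          calc μ {ω | Zr n ω ∈ dev S} ≤ μ (⋃ z ∈ dev S, {ω | Zr n ω = z}) :=
                MeasureTheory.measure_mono hA1'
            _ ≤ ∑ z ∈ dev S, μ {ω | Zr n ω = z} := MeasureTheory.measure_biUnion_finset_le _ _
            _ = ∑ z ∈ dev S, ENNReal.ofReal (∏ t, P (x n t) (z t)) :=
                Finset.sum_congr rfl (fun z _ => hZ n z)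
        rw [← ENNReal.ofReal_sum_of_nonneg
          (fun z _ => Finset.prod_nonneg fun t _ => hP0 _ _)] at hA2
        refine le_trans hA2 (ENNReal.ofReal_le_ofReal ?_)
        have hch := chernoff_two n (fun t => P (x n t))
          (fun t ζ => Λ (x n t) (S t ζ) - ℓ ζ (S t)) Lmax lam ((n : ℝ) * ε / 2)
          (fun t ζ => hP0 _ _) (fun t => hP1 _)
          (fun t ζ => hbound (x n t) ζ (S t))
          (fun t => by
            simp only [mul_sub]
            rw [Finset.sum_sub_distrib, sub_eq_zero]
            exact (hunbiased (x n t) (S t)).symm)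
          hlampos.le hlamL
        refine le_trans hch ?_
        have hexple : (n : ℝ) * (lam ^ 2 * Lmax ^ 2) - lam * ((n : ℝ) * ε / 2) ≤ -(c0 * n) := by
          have h1 : (n : ℝ) * (lam ^ 2 * Lmax ^ 2) ≤ (n : ℝ) * (lam * ε / 4) :=
            mul_le_mul_of_nonneg_left hlamsq hnR.le
          have h2 : (n : ℝ) * (lam * ε / 4) - lam * ((n : ℝ) * ε / 2) = -(c0 * (n : ℝ)) := by
            rw [hc0def]; ring
          linarith
        have := Real.exp_le_exp.2 hexple
        linarith
      calc μ {ω | ε < gapZ Λ α x Shat n (Zr n ω)}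
          ≤ μ (⋃ S ∈ Fset, {ω | Zr n ω ∈ dev S}) := MeasureTheory.measure_mono hsub
        _ ≤ ∑ S ∈ Fset, μ {ω | Zr n ω ∈ dev S} := MeasureTheory.measure_biUnion_finset_le _ _
        _ ≤ ∑ S ∈ Fset, ENNReal.ofReal (2 * Real.exp (-(c0 * n))) :=
            Finset.sum_le_sum (fun S _ => hdev_bound S)
        _ = (Fset.card : ENNReal) * ENNReal.ofReal (2 * Real.exp (-(c0 * n))) := by
            rw [Finset.sum_const, nsmul_eq_mul]
        _ ≤ ((d n : ℕ) : ENNReal) * ENNReal.ofReal (2 * Real.exp (-(c0 * n))) := by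
            apply mul_le_mul_left
            have hcard : Fset.card ≤ d n := by
              rw [hFset, hddef]
              exact card_low_switch hn ⌊(n : ℝ) ^ α⌋₊
            exact_mod_cast Nat.cast_le.2 hcard
        _ = ENNReal.ofReal (((d n : ℕ) : ℝ) * (2 * Real.exp (-(c0 * n)))) := by
            rw [← ENNReal.ofReal_natCast (d n), ← ENNReal.ofReal_mul (by positivity)]
    -- summability in ℝ≥0∞
    have hle : ∀ n : ℕ, μ {ω | ε < gapZ Λ α x Shat n (Zr n ω)} ≤
        ENNReal.ofReal (((d n : ℕ) : ℝ) * (2 * Real.exp (-(c0 * n)))) := by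
      intro n
      rcases Nat.eq_zero_or_pos n with h0 | hpos
      · subst h0
        have hempty : {ω | ε < gapZ Λ α x Shat 0 (Zr 0 ω)} = ∅ := by
          apply Set.eq_empty_iff_forall_notMem.2
          intro ω hω
          rw [Set.mem_setOf_eq, hgap_zero (Zr 0 ω)] at hω
          linarith
        rw [hempty, MeasureTheory.measure_empty]
        exact zero_le
      · exact hbound_n n hpos
    have htsum : (∑' n, μ {ω | ε < gapZ Λ α x Shat n (Zr n ω)}) ≠ ⊤ := by
      apply ne_top_of_le_ne_top _ (ENNReal.tsum_le_tsum hle)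
      rw [← ENNReal.ofReal_tsum_of_nonneg (fun n => by positivity) hsum]
      exact ENNReal.ofReal_ne_top
    have hae := MeasureTheory.ae_eventually_notMem htsum
    filter_upwards [hae] with ω hω
    exact hω.mono (fun n hn => not_lt.1 hn)
  -- Step 3: assemble over a countable family of ε's.
  have hall : ∀ᵐ ω ∂μ, ∀ k : ℕ, ∀ᶠ n in Filter.atTop,
      gapZ Λ α x Shat n (Zr n ω) ≤ 1 / ((k : ℝ) + 1) := by
    rw [MeasureTheory.ae_all_iff]
    intro k
    exact hBC _ (by positivity)
  filter_upwards [hall] with ω hω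
  show Filter.Tendsto (fun n : ℕ => gapZ Λ α x Shat n (Zr n ω)) Filter.atTop (nhds 0)
  rw [Metric.tendsto_atTop]
  intro ε hε
  obtain ⟨k, hk⟩ := exists_nat_one_div_lt hε
  obtain ⟨N, hN⟩ := Filter.eventually_atTop.1 (hω k)
  refine ⟨N, fun n hn => ?_⟩
  rw [Real.dist_eq, sub_zero, abs_of_nonneg (hgap0 n _)]
  exact lt_of_le_of_lt (hN n hn) hk
end
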